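/- arXiv:2311.06849 — 3 statements merged into one kernel-verified Lean document; each statement's English description precedes it below -/
import Mathlib

section
/- Let V : ℂ → ℂ be entire and suppose |V(z)| ≤ (C·γ^j/(j−1)!)·(q + |z|)^(2(j−1))·e^{−Re(κ·z)} for all z ∈ ℂ, where C, γ > 0, κ > 0 real, q ≥ 0, j ≥ 1. Then for every n ≥ 1 and all z ∈ ℂ, |V^(n)(z)| ≤ C·(κ^n·n!·e^(n+1)/(n+1)^n)·(γ^j/(j−1)!)·e^{−Re(κ·z)}·(q + (n+1)/κ + |z|)^(2(j−1)). -/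
open Complex Metric

/-! Cauchy's estimate on the circle of radius `R` about `z` bounds `n! ‖V^{(n)}(z)‖ / R^n` by the
maximum of `‖V‖` on that circle. There the weight `e^{-κ Re w}` grows by at most `e^{κ R}` and
`q + ‖w‖` by at most `R`; the radius `R = (n+1)/κ` makes `e^{κ R} = e^{n+1}`. -/

theorem Real.exp_neg_mul_re_le_of_norm_sub_le {κ R : ℝ} {w z : ℂ} (hκ : 0 ≤ κ)
    (hwz : ‖w - z‖ ≤ R) :
    Real.exp (-(κ * w.re)) ≤ Real.exp (κ * R) * Real.exp (-(κ * z.re)) := by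
  rw [← Real.exp_add, Real.exp_le_exp]
  have hre : z.re - w.re ≤ R := by
    have h := (abs_le.1 ((abs_re_le_norm (w - z)).trans hwz)).1
    rw [sub_re] at h
    linarith
  linarith [mul_le_mul_of_nonneg_left hre hκ]

theorem Complex.norm_iteratedDeriv_le_of_norm_le_mul_pow_mul_exp
    {F : Type*} [NormedAddCommGroup F] [NormedSpace ℂ F] [CompleteSpace F]
    {V : ℂ → F} (hV : Differentiable ℂ V) {A q κ R : ℝ} {m : ℕ} (hA : 0 ≤ A) (hq : 0 ≤ q)
    (hκ : 0 ≤ κ) (hR : 0 < R)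
    (hbound : ∀ w : ℂ, ‖V w‖ ≤ A * (q + ‖w‖) ^ m * Real.exp (-(κ * w.re))) (n : ℕ) (z : ℂ) :
    ‖iteratedDeriv n V z‖ ≤
      n.factorial * (A * (q + R + ‖z‖) ^ m * (Real.exp (κ * R) * Real.exp (-(κ * z.re)))) /
        R ^ n := by
  refine norm_iteratedDeriv_le_of_forall_mem_sphere_norm_le n hR hV.diffContOnCl fun w hw ↦ ?_
  have hwz : ‖w - z‖ = R := mem_sphere_iff_norm.1 hw
  have hw_norm : q + ‖w‖ ≤ q + R + ‖z‖ := by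
    linarith [norm_le_norm_add_norm_sub' w z]
  calc ‖V w‖ ≤ A * (q + ‖w‖) ^ m * Real.exp (-(κ * w.re)) := hbound w
    _ ≤ A * (q + R + ‖z‖) ^ m * (Real.exp (κ * R) * Real.exp (-(κ * z.re))) := by
      gcongr
      exact Real.exp_neg_mul_re_le_of_norm_sub_le hκ hwz.le

theorem stmt_5_general (V : ℂ → ℂ) (hV : Differentiable ℂ V)
    (C γ q κ : ℝ) (hC : 0 < C) (hγ : 0 < γ) (hq : 0 ≤ q) (hκ : 0 < κ)
    (j : ℕ)
    (hbound : ∀ z : ℂ, ‖V z‖ ≤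
      C * γ ^ j / (j - 1).factorial * (q + ‖z‖) ^ (2 * (j - 1)) *
        Real.exp (-(κ * z.re)))
    (n : ℕ) :
    ∀ z : ℂ, ‖iteratedDeriv n V z‖ ≤
      C * (κ ^ n * n.factorial * Real.exp 1 ^ (n + 1) / (n + 1 : ℝ) ^ n) *
        (γ ^ j / (j - 1).factorial) * Real.exp (-(κ * z.re)) *
        (q + (n + 1) / κ + ‖z‖) ^ (2 * (j - 1)) := by
  intro z
  have hR : 0 < (n + 1 : ℝ) / κ := by positivity
  have hκR : κ * ((n + 1) / κ) = n + 1 := by field_simp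
  refine (norm_iteratedDeriv_le_of_norm_le_mul_pow_mul_exp hV (by positivity) hq hκ.le hR
    hbound n z).trans_eq ?_
  rw [hκR, Real.exp_one_pow, Nat.cast_succ, div_pow]
  field_simp

theorem stmt_5 (V : ℂ → ℂ) (hV : Differentiable ℂ V)
    (C γ q κ : ℝ) (hC : 0 < C) (hγ : 0 < γ) (hq : 0 ≤ q) (hκ : 0 < κ)
    (j : ℕ) (hj : 1 ≤ j)
    (hbound : ∀ z : ℂ, ‖V z‖ ≤
      C * γ ^ j / (j - 1).factorial * (q + ‖z‖) ^ (2 * (j - 1)) *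
        Real.exp (-(κ * z.re)))
    (n : ℕ) (hn : 1 ≤ n) :
    ∀ z : ℂ, ‖iteratedDeriv n V z‖ ≤
      C * (κ ^ n * n.factorial * Real.exp 1 ^ (n + 1) / (n + 1 : ℝ) ^ n) *
        (γ ^ j / (j - 1).factorial) * Real.exp (-(κ * z.re)) *
        (q + (n + 1) / κ + ‖z‖) ^ (2 * (j - 1)) :=
  stmt_5_general V hV C γ q κ hC hγ hq hκ j hbound n
end

section
/- For all real a > 0 and ξ with ξ > max{a−1, 0}, the upper incomplete Gamma function satisfies Γ(a, ξ) ≤ e^{−ξ}·ξ^a/(ξ − a₀), where a₀ = max{a−1, 0}. -/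
/-!
For `t ≥ ξ` and any `b ≥ max (a - 1) 0` we have
`t ^ (a - 1) ≤ ξ ^ (a - 1) * (t / ξ) ^ b ≤ ξ ^ (a - 1) * exp (b * (t / ξ - 1))`,
the last step being `log x ≤ x - 1`. Hence the integrand of `Γ(a, ξ)` is dominated by
`ξ ^ (a - 1) * exp (-b) * exp ((b / ξ - 1) * t)`, an exponential that decays as soon as `b < ξ`,
and whose integral over `(ξ, ∞)` is exactly `exp (-ξ) * ξ ^ a / (ξ - b)`.
-/

open Real MeasureTheory Set

lemma Real.rpow_le_exp_mul_sub_one {x p : ℝ} (hx : 0 < x) (hp : 0 ≤ p) :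
    x ^ p ≤ exp (p * (x - 1)) := by
  rw [rpow_def_of_pos hx, mul_comm, exp_le_exp]
  exact mul_le_mul_of_nonneg_left (log_le_sub_one_of_pos hx) hp

lemma rpow_le_rpow_mul_exp_of_le {a b ξ t : ℝ} (hb : 0 ≤ b) (hab : a - 1 ≤ b) (hξ : 0 < ξ)
    (hξt : ξ ≤ t) : t ^ (a - 1) ≤ ξ ^ (a - 1) * exp (b * (t / ξ - 1)) := by
  have hone : 1 ≤ t / ξ := (one_le_div hξ).mpr hξt
  calc t ^ (a - 1) = ξ ^ (a - 1) * (t / ξ) ^ (a - 1) := by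
        rw [← mul_rpow hξ.le (by positivity), mul_div_cancel₀ _ hξ.ne']
    _ ≤ ξ ^ (a - 1) * (t / ξ) ^ b := by gcongr
    _ ≤ ξ ^ (a - 1) * exp (b * (t / ξ - 1)) := by
        gcongr; exact rpow_le_exp_mul_sub_one (by positivity) hb

lemma upperIncompleteGamma_integrand_le {a b ξ t : ℝ} (hb : 0 ≤ b) (hab : a - 1 ≤ b)
    (hξ : 0 < ξ) (hξt : ξ ≤ t) :
    t ^ (a - 1) * exp (-t) ≤ ξ ^ (a - 1) * exp (-b) * exp ((b / ξ - 1) * t) := by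
  calc t ^ (a - 1) * exp (-t) ≤ ξ ^ (a - 1) * exp (b * (t / ξ - 1)) * exp (-t) := by
        gcongr; exact rpow_le_rpow_mul_exp_of_le hb hab hξ hξt
    _ = ξ ^ (a - 1) * exp (-b) * exp ((b / ξ - 1) * t) := by
        rw [mul_assoc, mul_assoc, ← exp_add, ← exp_add]
        ring_nf

lemma integral_upperIncompleteGamma_le {a b ξ : ℝ} (hb : 0 ≤ b) (hab : a - 1 ≤ b)
    (hbξ : b < ξ) :
    ∫ t in Ioi ξ, t ^ (a - 1) * exp (-t) ≤ exp (-ξ) * ξ ^ a / (ξ - b) := by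
  have hξ : 0 < ξ := hb.trans_lt hbξ
  have hdecay : b / ξ - 1 < 0 := by rw [sub_neg, div_lt_one hξ]; exact hbξ
  have hmajorant_int : IntegrableOn (fun t ↦ ξ ^ (a - 1) * exp (-b) * exp ((b / ξ - 1) * t))
      (Ioi ξ) := (integrableOn_exp_mul_Ioi hdecay ξ).const_mul _
  calc ∫ t in Ioi ξ, t ^ (a - 1) * exp (-t)
      ≤ ∫ t in Ioi ξ, ξ ^ (a - 1) * exp (-b) * exp ((b / ξ - 1) * t) := by
        refine integral_mono_of_nonneg ?_ hmajorant_int ?_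
        · filter_upwards [self_mem_ae_restrict measurableSet_Ioi] with t ht
          have : 0 < t := hξ.trans ht
          positivity
        · filter_upwards [self_mem_ae_restrict measurableSet_Ioi] with t ht
          exact upperIncompleteGamma_integrand_le hb hab hξ (le_of_lt ht)
    _ = exp (-ξ) * ξ ^ a / (ξ - b) := by
        have hexp : exp (-b) * exp (b - ξ) = exp (-ξ) := by rw [← exp_add]; ring_nf
        rw [integral_const_mul, integral_exp_mul_Ioi hdecay, rpow_sub_one hξ.ne',
          show (b / ξ - 1) * ξ = b - ξ by field_simp, ← hexp,
          show b / ξ - 1 = -((ξ - b) / ξ) by field_simp; ring]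
        have : ξ - b ≠ 0 := (sub_pos.mpr hbξ).ne'
        field_simp

theorem stmt_7_general (a ξ : ℝ) (hξ : max (a - 1) 0 < ξ) :
    ∫ t in Set.Ioi ξ, t ^ (a - 1) * Real.exp (-t) ≤
      Real.exp (-ξ) * ξ ^ a / (ξ - max (a - 1) 0) :=
  integral_upperIncompleteGamma_le (le_max_right _ _) (le_max_left _ _) hξ

theorem stmt_7 (a ξ : ℝ) (ha : 0 < a) (hξ : max (a - 1) 0 < ξ) :
    ∫ t in Set.Ioi ξ, t ^ (a - 1) * Real.exp (-t) ≤
      Real.exp (-ξ) * ξ ^ a / (ξ - max (a - 1) 0) :=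
  stmt_7_general a ξ hξ
end

section
/- For every natural number j ≥ 1, real q > 0, κ > 0, and s ≥ 0 with 2κ·q ≥ 2j−1, if additionally (2j−1)/κ ≤ q/2, then ∫₀^∞ t·(q + s + t/κ)^(2j−1)·e^{−t} dt ≤ 4·(q + s)^(2j−1). -/
open MeasureTheory Real Set

theorem stmt_9 (j : ℕ) (hj : 1 ≤ j) (q κ s : ℝ) (hq : 0 < q) (hκ : 0 < κ)
    (hs : 0 ≤ s) (h : (2 * j - 1 : ℝ) / κ ≤ q / 2) :
    ∫ t in Set.Ioi (0 : ℝ), t * (q + s + t / κ) ^ (2 * j - 1) * Real.exp (-t) ≤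
      4 * (q + s) ^ (2 * j - 1) := by
  set m : ℕ := 2 * j - 1 with hm
  have hm1 : 1 ≤ m := by omega
  have hmr : (m : ℝ) = 2 * (j : ℝ) - 1 := by
    push_cast [hm, Nat.cast_sub (by omega : 1 ≤ 2 * j)]; ring
  have hmpos : (0 : ℝ) < m := by exact_mod_cast hm1
  have hqs : 0 < q + s := by linarith
  -- integrability of comparison function t ↦ t * exp(-t/2)
  have hint : IntegrableOn (fun t : ℝ => t * Real.exp (-(1/2) * t)) (Ioi 0) := by
    have := integrableOn_rpow_mul_exp_neg_mul_rpow (p := 1) (s := 1) (b := 1/2)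
      (by norm_num) (by norm_num) (by norm_num)
    refine this.congr_fun (fun x hx => ?_) measurableSet_Ioi
    norm_num
  have hintg : IntegrableOn
      (fun t : ℝ => (q + s) ^ m * (t * Real.exp (-(1/2) * t))) (Ioi 0) :=
    hint.const_mul _
  -- pointwise bound
  have hbound : ∀ t ∈ Ioi (0:ℝ),
      t * (q + s + t / κ) ^ m * Real.exp (-t)
        ≤ (q + s) ^ m * (t * Real.exp (-(1/2) * t)) := by
    intro t ht
    have ht0 : 0 < t := ht
    have h1 : q + s + t / κ ≤ (q + s) * (1 + t / (2 * m)) := by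
      have hmk : (m : ℝ) / κ ≤ q / 2 := by rw [hmr]; exact h
      have hk : 1 / κ ≤ (q + s) / (2 * m) := by
        rw [div_le_div_iff₀ hκ (by positivity)]
        rw [div_le_div_iff₀ hκ (by norm_num)] at hmk
        nlinarith [mul_nonneg hs hκ.le]
      have h5 : t / κ ≤ t * ((q + s) / (2 * m)) := by
        rw [div_eq_mul_one_div]
        exact mul_le_mul_of_nonneg_left hk ht0.le
      have h6 : (q + s) * (1 + t / (2 * m)) = (q + s) + t * ((q + s) / (2 * m)) := by
        field_simp
      linarith
    have h2 : (q + s + t / κ) ^ m ≤ ((q + s) * (1 + t / (2 * m))) ^ m :=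
      pow_le_pow_left₀ (by positivity) h1 m
    have h3 : (1 + t / (2 * m)) ^ m ≤ Real.exp (t / 2) := by
      calc (1 + t / (2 * m)) ^ m ≤ (Real.exp (t / (2 * m))) ^ m :=
            pow_le_pow_left₀ (by positivity) (Real.add_one_le_exp _ |>.trans_eq' (by ring_nf)) m
        _ = Real.exp (m * (t / (2 * m))) := by rw [← Real.exp_nat_mul]
        _ = Real.exp (t / 2) := by
            congr 1; field_simp
    have h4 : (q + s + t / κ) ^ m ≤ (q + s) ^ m * Real.exp (t / 2) := by
      calc (q + s + t / κ) ^ m ≤ ((q + s) * (1 + t / (2 * m))) ^ m := h2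
        _ = (q + s) ^ m * (1 + t / (2 * m)) ^ m := mul_pow _ _ _
        _ ≤ (q + s) ^ m * Real.exp (t / 2) :=
            mul_le_mul_of_nonneg_left h3 (by positivity)
    calc t * (q + s + t / κ) ^ m * Real.exp (-t)
        ≤ t * ((q + s) ^ m * Real.exp (t / 2)) * Real.exp (-t) := by
          apply mul_le_mul_of_nonneg_right _ (Real.exp_pos _).le
          exact mul_le_mul_of_nonneg_left h4 ht0.le
      _ = (q + s) ^ m * (t * Real.exp (-(1/2) * t)) := by
          rw [show -(1/2) * t = t/2 + -t by ring, Real.exp_add]; ring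
  -- value of comparison integral
  have hval : ∫ t in Ioi (0:ℝ), t * Real.exp (-(1/2) * t) = 4 := by
    have := integral_rpow_mul_exp_neg_mul_Ioi (a := 2) (r := 1/2)
      (by norm_num) (by norm_num)
    rw [show ∫ t in Ioi (0:ℝ), t * Real.exp (-(1/2) * t)
        = ∫ t in Ioi (0:ℝ), t ^ ((2:ℝ) - 1) * Real.exp (-(1/2 * t)) from ?_, this]
    · rw [Real.Gamma_two]; norm_num
    · refine setIntegral_congr_fun measurableSet_Ioi (fun x hx => ?_)
      rw [show (2:ℝ) - 1 = 1 by norm_num, rpow_one, neg_mul]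
  calc ∫ t in Ioi (0:ℝ), t * (q + s + t / κ) ^ m * Real.exp (-t)
      ≤ ∫ t in Ioi (0:ℝ), (q + s) ^ m * (t * Real.exp (-(1/2) * t)) := by
        refine setIntegral_mono_on ?_ hintg measurableSet_Ioi hbound
        · refine hintg.mono' ?_ ?_
          · apply Measurable.aestronglyMeasurable
            fun_prop
          · filter_upwards [ae_restrict_mem measurableSet_Ioi] with t ht
            have ht0 : 0 < t := ht
            rw [Real.norm_of_nonneg (by positivity)]
            exact hbound t ht
    _ = (q + s) ^ m * ∫ t in Ioi (0:ℝ), t * Real.exp (-(1/2) * t) := integral_const_mul _ _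
    _ = 4 * (q + s) ^ m := by rw [hval]; ring
end
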